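/- arXiv:2205.12351 — 3 statements merged into one kernel-verified Lean document; each statement's English description precedes it below -/
import Mathlib

section
/- Let γ : [0,1] → M be a smooth path in a contact manifold with contact form λ, let H = H(t,x) be a time-dependent contact Hamiltonian with flow ψ_H^t, and set φ_H^t = ψ_H^t ∘ (ψ_H^1)^{-1}. Define the gauge-transformed path γ̄(t) = (φ_H^t)^{-1}(γ(t)). Then the perturbed action equals the unperturbed action of the transformed path: ∫_0^1 e^{g_{(φ_H^t)^{-1}}(γ(t))} (γ*λ + H(t,γ(t)) dt) = ∫_0^1 γ̄*λ. -/
/-!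
Write `γ̄ = ψ_1 ∘ γ̃` with `γ̃ s = ψ_s⁻¹ (γ s)`. Differentiating `ψ_s (ψ_s⁻¹ x) = x` in `s` shows
that `s ↦ ψ_s⁻¹ x` has velocity `dψ_t⁻¹ (-X_t x)`, so `γ̃' t = dψ_t⁻¹ (γ' t - X_t (γ t))` and
`γ̄' t = d(φ_t⁻¹) (γ' t - X_t (γ t))`. Applying `λ`, the conformal factor `e^{g}` of `φ_t⁻¹`
and `λ(X_t) = -H_t` turn `λ(γ̄')` into the perturbed integrand, pointwise in `t`.
-/

open scoped Manifold

section

variable {E : Type*} [NormedAddCommGroup E] [NormedSpace ℝ E]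
  {H : Type*} [TopologicalSpace H] {I : ModelWithCorners ℝ E H}
  {M : Type*} [TopologicalSpace M] [ChartedSpace H M]
  {E' : Type*} [NormedAddCommGroup E'] [NormedSpace ℝ E']
  {H' : Type*} [TopologicalSpace H'] {I' : ModelWithCorners ℝ E' H'}
  {M' : Type*} [TopologicalSpace M'] [ChartedSpace H' M']
  {F : Type*} [NormedAddCommGroup F] [NormedSpace ℝ F]
  {G : Type*} [TopologicalSpace G] {J : ModelWithCorners ℝ F G}
  {N : Type*} [TopologicalSpace N] [ChartedSpace G N]

theorem mfderiv_comp_prodMk_apply {f : N × M → M'} {c : N → M} {t : N}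
    (hf : MDifferentiableAt (J.prod I) I' f (t, c t)) (hc : MDifferentiableAt J I c t)
    (v : TangentSpace J t) :
    mfderiv J I' (fun s => f (s, c s)) t v
      = mfderiv J I' (fun s => f (s, c t)) t v
        + mfderiv I I' (fun y => f (t, y)) (c t) (mfderiv J I c t v) := by
  rw [show (fun s => f (s, c s)) = f ∘ fun s => (id s, c s) from rfl,
    mfderiv_comp_apply t hf (mdifferentiableAt_id.prodMk hc),
    mdifferentiableAt_id.mfderiv_prod hc, mfderiv_id]
  exact mfderiv_prod_eq_add_apply hf

theorem MDifferentiable.curry_left {f : N × M → M'} (hf : MDifferentiable (J.prod I) I' f)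
    (y : M) : MDifferentiable J I' fun s => f (s, y) := fun s =>
  (hf _).comp s (mdifferentiableAt_id.prodMk mdifferentiableAt_const)

theorem MDifferentiable.curry_right {f : N × M → M'} (hf : MDifferentiable (J.prod I) I' f)
    (t : N) : MDifferentiable I I' fun y => f (t, y) := fun y =>
  (hf _).comp y (mdifferentiableAt_const.prodMk mdifferentiableAt_id)

theorem Equiv.mfderiv_symm_apply_mfderiv_apply (e : M ≃ M') {x : M'}
    (he : MDifferentiableAt I I' e (e.symm x)) (he' : MDifferentiableAt I' I e.symm x)
    (v : TangentSpace I (e.symm x)) :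
    mfderiv I' I e.symm x (mfderiv I I' e (e.symm x) v) = v := by
  rw [← mfderiv_comp_apply_of_eq _ he' he (e.apply_symm_apply x), e.symm_comp_self, mfderiv_id]
  rfl

variable {ψ : ℝ → M ≃ M} {X : ℝ → (x : M) → TangentSpace I x}

theorem mfderiv_flow_symm_apply
    (hψ : MDifferentiable (𝓘(ℝ, ℝ).prod I) I fun p : ℝ × M => ψ p.1 p.2)
    (hψ' : MDifferentiable (𝓘(ℝ, ℝ).prod I) I fun p : ℝ × M => (ψ p.1).symm p.2)
    (hflow : ∀ (p : M) (t : ℝ), mfderiv 𝓘(ℝ, ℝ) I (fun s => ψ s p) t (1 : ℝ) = X t (ψ t p))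
    (x : M) (t : ℝ) :
    mfderiv 𝓘(ℝ, ℝ) I (fun s => (ψ s).symm x) t (1 : ℝ) = mfderiv I I (ψ t).symm x (- X t x) := by
  -- differentiate `ψ s ((ψ s)⁻¹ x) = x` at `s = t`
  have hconst : mfderiv 𝓘(ℝ, ℝ) I (fun s => ψ s ((ψ s).symm x)) t (1 : ℝ) = 0 := by
    rw [funext fun s => (ψ s).apply_symm_apply x, mfderiv_const]
    rfl
  have htime : mfderiv 𝓘(ℝ, ℝ) I (fun s => ψ s ((ψ t).symm x)) t (1 : ℝ) = X t x := by
    rw [hflow, (ψ t).apply_symm_apply]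
  have hspace : mfderiv I I (ψ t) ((ψ t).symm x)
      (mfderiv 𝓘(ℝ, ℝ) I (fun s => (ψ s).symm x) t (1 : ℝ)) = - X t x := by
    have hsplit := mfderiv_comp_prodMk_apply (hψ _) (hψ'.curry_left x t) (1 : ℝ)
    dsimp only at hsplit
    rw [hconst, htime] at hsplit
    exact eq_neg_of_add_eq_zero_right hsplit.symm
  rw [← hspace, (ψ t).mfderiv_symm_apply_mfderiv_apply (hψ.curry_right t _) (hψ'.curry_right t _)]

theorem mfderiv_flow_symm_apply_curve
    (hψ : MDifferentiable (𝓘(ℝ, ℝ).prod I) I fun p : ℝ × M => ψ p.1 p.2)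
    (hψ' : MDifferentiable (𝓘(ℝ, ℝ).prod I) I fun p : ℝ × M => (ψ p.1).symm p.2)
    (hflow : ∀ (p : M) (t : ℝ), mfderiv 𝓘(ℝ, ℝ) I (fun s => ψ s p) t (1 : ℝ) = X t (ψ t p))
    {γ : ℝ → M} {t : ℝ} (hγ : MDifferentiableAt 𝓘(ℝ, ℝ) I γ t) :
    mfderiv 𝓘(ℝ, ℝ) I (fun s => (ψ s).symm (γ s)) t (1 : ℝ)
      = mfderiv I I (ψ t).symm (γ t) (mfderiv 𝓘(ℝ, ℝ) I γ t (1 : ℝ) - X t (γ t)) := by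
  have hsplit := mfderiv_comp_prodMk_apply (hψ' _) hγ (1 : ℝ)
  dsimp only at hsplit
  rw [hsplit, mfderiv_flow_symm_apply hψ hψ' hflow, sub_eq_neg_add, map_add]

end

theorem perturbed_action_eq_action_of_gauge_transform_general
    {E : Type*} [NormedAddCommGroup E] [NormedSpace ℝ E]
    {H' : Type*} [TopologicalSpace H'] {I : ModelWithCorners ℝ E H'}
    {M : Type*} [TopologicalSpace M] [ChartedSpace H' M]
    (lam : (x : M) → TangentSpace I x →L[ℝ] ℝ)
    (Hf : ℝ → M → ℝ)
    (X : ℝ → (x : M) → TangentSpace I x)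
    (ψ : ℝ → M ≃ M)
    (hψsmooth : ContMDiff (𝓘(ℝ, ℝ).prod I) I (⊤ : ℕ∞) fun p : ℝ × M => ψ p.1 p.2)
    (hψsmooth' : ContMDiff (𝓘(ℝ, ℝ).prod I) I (⊤ : ℕ∞) fun p : ℝ × M => (ψ p.1).symm p.2)
    (hψflow : ∀ (p : M) (t : ℝ),
      mfderiv 𝓘(ℝ, ℝ) I (fun s => ψ s p) t (1 : ℝ) = X t (ψ t p))
    (hHam : ∀ (t : ℝ) (x : M), lam x (X t x) = - Hf t x)
    (φ : ℝ → M ≃ M) (hφ : ∀ t, φ t = (ψ 1).symm.trans (ψ t))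
    (g : ℝ → M → ℝ)
    (hg : ∀ (t : ℝ) (x : M) (v : TangentSpace I x),
      lam ((φ t).symm x) (mfderiv I I ((φ t).symm : M → M) x v)
        = Real.exp (g t x) * lam x v)
    (γ : ℝ → M) (hγ : ContMDiff 𝓘(ℝ, ℝ) I (⊤ : ℕ∞) γ)
    (γbar : ℝ → M) (hγbar : ∀ t, γbar t = (φ t).symm (γ t)) :
    ∫ t in (0:ℝ)..1,
        Real.exp (g t (γ t)) *
          (lam (γ t) (mfderiv 𝓘(ℝ, ℝ) I γ t (1 : ℝ)) + Hf t (γ t))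
      = ∫ t in (0:ℝ)..1, lam (γbar t) (mfderiv 𝓘(ℝ, ℝ) I γbar t (1 : ℝ)) := by
  have hψ := hψsmooth.mdifferentiable (by simp)
  have hψ' := hψsmooth'.mdifferentiable (by simp)
  have hφ' : ∀ s, ⇑(φ s).symm = ψ 1 ∘ (ψ s).symm := fun s => by rw [hφ]; rfl
  have hγbar' : γbar = ψ 1 ∘ fun s => (ψ s).symm (γ s) := funext fun s => by
    rw [hγbar, hφ']; rfl
  refine intervalIntegral.integral_congr fun t _ => ?_
  have hγt : MDifferentiableAt 𝓘(ℝ, ℝ) I γ t := hγ.mdifferentiableAt (by simp)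
  have hψ1 : MDifferentiable I I (ψ 1) := hψ.curry_right 1
  have hcurve : MDifferentiableAt 𝓘(ℝ, ℝ) I (fun s => (ψ s).symm (γ s)) t :=
    (hψ' _).comp t (mdifferentiableAt_id.prodMk hγt)
  have hdγbar : mfderiv 𝓘(ℝ, ℝ) I γbar t (1 : ℝ)
      = mfderiv I I (φ t).symm (γ t) (mfderiv 𝓘(ℝ, ℝ) I γ t (1 : ℝ) - X t (γ t)) := by
    rw [hγbar', mfderiv_comp_apply t (hψ1 _) hcurve (1 : ℝ),
      mfderiv_flow_symm_apply_curve hψ hψ' hψflow hγt, hφ' t,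
      mfderiv_comp_apply _ (hψ1 _) (hψ'.curry_right t _)]
  calc Real.exp (g t (γ t)) * (lam (γ t) (mfderiv 𝓘(ℝ, ℝ) I γ t (1 : ℝ)) + Hf t (γ t))
      = Real.exp (g t (γ t)) * lam (γ t) (mfderiv 𝓘(ℝ, ℝ) I γ t (1 : ℝ) - X t (γ t)) := by
        rw [map_sub, hHam, sub_neg_eq_add]
    _ = lam (γbar t) (mfderiv 𝓘(ℝ, ℝ) I γbar t (1 : ℝ)) := by
        rw [hdγbar, hγbar, hg]

/-- The perturbed action of a path `γ` equals the unperturbed contact action of the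
gauge-transformed path `γ̄(t) = (φ_H^t)⁻¹(γ(t))`, where `φ_H^t = ψ_H^t ∘ (ψ_H^1)⁻¹`:
`∫₀¹ e^{g_{(φ_H^t)⁻¹}(γ(t))} (γ*λ + H(t,γ(t)) dt) = ∫₀¹ γ̄*λ`. -/
theorem perturbed_action_eq_action_of_gauge_transform
    {E : Type*} [NormedAddCommGroup E] [NormedSpace ℝ E]
    {H' : Type*} [TopologicalSpace H'] {I : ModelWithCorners ℝ E H'}
    {M : Type*} [TopologicalSpace M] [ChartedSpace H' M] [IsManifold I (⊤ : ℕ∞) M]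
    (lam : (x : M) → TangentSpace I x →L[ℝ] ℝ)
    (Hf : ℝ → M → ℝ)
    (X : ℝ → (x : M) → TangentSpace I x)
    (ψ : ℝ → M ≃ M)
    (hψ0 : ψ 0 = Equiv.refl M)
    (hψsmooth : ContMDiff (𝓘(ℝ, ℝ).prod I) I (⊤ : ℕ∞) fun p : ℝ × M => ψ p.1 p.2)
    (hψsmooth' : ContMDiff (𝓘(ℝ, ℝ).prod I) I (⊤ : ℕ∞) fun p : ℝ × M => (ψ p.1).symm p.2)
    (hψflow : ∀ (p : M) (t : ℝ),
      mfderiv 𝓘(ℝ, ℝ) I (fun s => ψ s p) t (1 : ℝ) = X t (ψ t p))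
    (hHam : ∀ (t : ℝ) (x : M), lam x (X t x) = - Hf t x)
    (φ : ℝ → M ≃ M) (hφ : ∀ t, φ t = (ψ 1).symm.trans (ψ t))
    (g : ℝ → M → ℝ)
    (hg : ∀ (t : ℝ) (x : M) (v : TangentSpace I x),
      lam ((φ t).symm x) (mfderiv I I ((φ t).symm : M → M) x v)
        = Real.exp (g t x) * lam x v)
    (γ : ℝ → M) (hγ : ContMDiff 𝓘(ℝ, ℝ) I (⊤ : ℕ∞) γ)
    (γbar : ℝ → M) (hγbar : ∀ t, γbar t = (φ t).symm (γ t)) :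
    ∫ t in (0:ℝ)..1,
        Real.exp (g t (γ t)) *
          (lam (γ t) (mfderiv 𝓘(ℝ, ℝ) I γ t (1 : ℝ)) + Hf t (γ t))
      = ∫ t in (0:ℝ)..1, lam (γbar t) (mfderiv 𝓘(ℝ, ℝ) I γbar t (1 : ℝ)) :=
  perturbed_action_eq_action_of_gauge_transform_general lam Hf X ψ hψsmooth hψsmooth' hψflow hHam φ
    hφ g hg γ hγ γbar hγbar
end

section
/- Let u be an H-perturbed contact Cauchy-Riemann map on a Riemann surface with one-form γ. Then the exterior derivative of u*λ_H, where λ_H = λ + H γ, satisfies d(u*λ_H) = ½|d_H^π u|² dA + u*(R_λ[H] λ) ∧ γ + u*H · dγ, where dA is the area form and R_λ[H] is the Reeb-derivative of H. -/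
/-- Pointwise form of Lemma `d(u*λ_H) = ½|d_H^π u|² dA + u*(R_λ[H] λ) ∧ γ + u*H dγ` for an
`H`-perturbed contact CR map.  Here `V` models the tangent space of `M` at a point, with
contact form `λ`, Reeb vector `R`, `dλ`, complex structure `J` on `ξ = ker λ`; `T` models the
tangent plane of the surface with complex structure `jT`; `D` is the differential `du` at the
point, `XH` the contact Hamiltonian vector, `γ` the one-form of the domain, `Hval = H(u)`,
`RH = R_λ[H](u)`, `dH` the differential of `H`, `dγval = dγ(e, je)`, and `pi` the projection
to `ξ` along `R`.  Evaluating both sides of the displayed two-form identity on the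
orthonormal frame `(e, jT e)` (so that `dA(e, jT e) = 1`) gives the stated equality. -/
theorem d_u_pullback_lambdaH_identity
    {V T : Type*} [AddCommGroup V] [Module ℝ V] [AddCommGroup T] [Module ℝ T]
    (lam : V →ₗ[ℝ] ℝ) (R : V) (hR : lam R = 1)
    (dlam : V →ₗ[ℝ] V →ₗ[ℝ] ℝ) (halt : ∀ v : V, dlam v v = 0)
    (hdlamR : ∀ v : V, dlam R v = 0)
    (J : V →ₗ[ℝ] V) (hJR : J R = 0) (hJlam : ∀ v : V, lam (J v) = 0)
    (hJJ : ∀ v : V, lam v = 0 → J (J v) = -v)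
    (hcompat : ∀ v w : V, lam v = 0 → lam w = 0 → dlam (J v) (J w) = dlam v w)
    (jT : T →ₗ[ℝ] T) (hjT : ∀ t : T, jT (jT t) = -t)
    (D : T →ₗ[ℝ] V) (XH : V) (γ : T →ₗ[ℝ] ℝ) (Hval RH : ℝ) (dH : V →ₗ[ℝ] ℝ)
    (hHam : lam XH = -Hval)
    (hXH : ∀ v : V, dlam XH v = dH v - RH * lam v)
    (pi : V → V) (hpi : ∀ v : V, pi v = v - lam v • R)
    (hCR : ∀ t : T, pi (D (jT t) - γ (jT t) • XH) = J (pi (D t - γ t • XH)))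
    (e : T) (dγval : ℝ) :
    dlam (D e) (D (jT e)) + (dH (D e) * γ (jT e) - dH (D (jT e)) * γ e) + Hval * dγval
      = (1 / 2) *
          (dlam (pi (D e - γ e • XH)) (J (pi (D e - γ e • XH)))
            + dlam (pi (D (jT e) - γ (jT e) • XH)) (J (pi (D (jT e) - γ (jT e) • XH))))
        + RH * (lam (D e) * γ (jT e) - lam (D (jT e)) * γ e) + Hval * dγval := by

  set A := D e - γ e • XH with hA
  set B := D (jT e) - γ (jT e) • XH with hB
  have skew : ∀ x y : V, dlam x y = -dlam y x := by
    intro x y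
    have h := halt (x + y)
    simp [map_add, halt] at h
    linarith
  have hdR : ∀ v : V, dlam v R = 0 := by
    intro v; rw [skew, hdlamR]; ring
  have hlamπ : ∀ v : V, lam (pi v) = 0 := by
    intro v; rw [hpi]; simp [hR]
  have hπB : pi B = J (pi A) := hCR e
  -- second term of the square norm equals the first
  have hterm2 : dlam (pi B) (J (pi B)) = dlam (pi A) (J (pi A)) := by
    rw [hπB, hJJ (pi A) (hlamπ A)]
    rw [skew]
    simp
  -- dlam (pi A) (pi B) = dlam A B
  have hπ : dlam (pi A) (pi B) = dlam A B := by
    rw [hpi A, hpi B]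
    simp [map_sub, map_smul, hdlamR, hdR, smul_eq_mul]
  have hAB : dlam A B = dlam (D e) (D (jT e))
      + (dH (D e) * γ (jT e) - dH (D (jT e)) * γ e)
      - RH * (lam (D e) * γ (jT e) - lam (D (jT e)) * γ e) := by
    rw [hA, hB]
    have h1 : dlam (D e) XH = -(dH (D e) - RH * lam (D e)) := by
      rw [skew, hXH]
    have h2 : dlam XH (D (jT e)) = dH (D (jT e)) - RH * lam (D (jT e)) := hXH _
    simp only [map_sub, map_smul, LinearMap.sub_apply, LinearMap.smul_apply,
      smul_eq_mul, h1, h2, halt]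
    ring
  rw [hterm2, ← hπB, hπ, hAB]
  ring
end

section
/- Let E → Σ be a Hermitian vector bundle over a Riemann surface with Hermitian connection ∇ (i.e., ∇J = 0 for the complex structure J on fibers), and let α be an E-valued (1,0)-form (complex-linear: α∘j = Jα). Then ⟨d^∇ δ^∇ α, α⟩ = ⟨δ^∇ d^∇ α, α⟩ pointwise, and consequently ⟨Δ^∇ α, α⟩ = 2⟨δ^∇ d^∇ α, α⟩. -/
open scoped RealInnerProductSpace

/-- The complex structure `j` of the Riemann surface, modeled on `ℝ²`: `j(a,b) = (-b,a)`. -/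
noncomputable def jE : (ℝ × ℝ) →L[ℝ] (ℝ × ℝ) :=
  (-(ContinuousLinearMap.snd ℝ ℝ ℝ)).prod (ContinuousLinearMap.fst ℝ ℝ ℝ)

/-- Oriented orthonormal frame of the surface. -/
def e1 : ℝ × ℝ := (1, 0)
def e2 : ℝ × ℝ := (0, 1)

section

variable {F : Type*} [NormedAddCommGroup F] [InnerProductSpace ℝ F]

/-- Covariant derivative `∇_v s = ∂_v s + A(v)s` of a section `s` of the (trivialized)
bundle with connection matrix `A`. -/
noncomputable def covD (A : ℝ × ℝ → (ℝ × ℝ) →L[ℝ] F →L[ℝ] F)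
    (s : ℝ × ℝ → F) (x : ℝ × ℝ) (v : ℝ × ℝ) : F :=
  fderiv ℝ s x v + A x v (s x)

/-- Covariant exterior derivative of a bundle-valued `1`-form, on constant vectors:
`d^∇α(v,w) = ∇_v(α(w)) - ∇_w(α(v))`. -/
noncomputable def covExtD (A : ℝ × ℝ → (ℝ × ℝ) →L[ℝ] F →L[ℝ] F)
    (α : ℝ × ℝ → (ℝ × ℝ) → F) (x : ℝ × ℝ) (v w : ℝ × ℝ) : F :=
  covD A (fun y => α y w) x v - covD A (fun y => α y v) x w

/-- Covariant codifferential of a bundle-valued `1`-form, `δ^∇ = -*d^∇*` with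
`*α = -α∘j` on `1`-forms and `*` of a `2`-form its `(e₁,e₂)`-value. -/
noncomputable def covCodiff (A : ℝ × ℝ → (ℝ × ℝ) →L[ℝ] F →L[ℝ] F)
    (α : ℝ × ℝ → (ℝ × ℝ) → F) (x : ℝ × ℝ) : F :=
  -(covExtD A (fun y v => -(α y (jE v))) x e1 e2)

/-- Covariant codifferential of a bundle-valued `2`-form (`δ^∇ = -*d^∇*` on `2`-forms),
the `2`-form being recorded by its values `ω(x)(v,w)`. -/
noncomputable def covCodiff2 (A : ℝ × ℝ → (ℝ × ℝ) →L[ℝ] F →L[ℝ] F)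
    (ω : ℝ × ℝ → (ℝ × ℝ) → (ℝ × ℝ) → F) (x : ℝ × ℝ) (v : ℝ × ℝ) : F :=
  covD A (fun y => ω y e1 e2) x (jE v)

/-- Pointwise inner product of two bundle-valued `1`-forms. -/
noncomputable def ip1 (α β : ℝ × ℝ → (ℝ × ℝ) → F) (x : ℝ × ℝ) : ℝ :=
  ⟪α x e1, β x e1⟫ + ⟪α x e2, β x e2⟫

end


section auxlemmas

variable {F : Type*} [NormedAddCommGroup F] [InnerProductSpace ℝ F]

lemma jE_e1 : jE e1 = e2 := by
  simp [jE, e1, e2, Prod.ext_iff]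

lemma jE_e2 : jE e2 = -e1 := by
  simp [jE, e1, e2, Prod.ext_iff]

lemma covD_neg (A : ℝ × ℝ → (ℝ × ℝ) →L[ℝ] F →L[ℝ] F) (s : ℝ × ℝ → F) (x v : ℝ × ℝ) :
    covD A (fun y => -(s y)) x v = -(covD A s x v) := by
  simp [covD, fderiv_neg, neg_add, add_comm]

lemma covD_neg_vec (A : ℝ × ℝ → (ℝ × ℝ) →L[ℝ] F →L[ℝ] F) (s : ℝ × ℝ → F) (x v : ℝ × ℝ) :
    covD A s x (-v) = -(covD A s x v) := by
  simp [covD, neg_add, add_comm]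

lemma covD_J (J : F →L[ℝ] F) (A : ℝ × ℝ → (ℝ × ℝ) →L[ℝ] F →L[ℝ] F)
    (hJcomm : ∀ (x v : ℝ × ℝ) (f : F), A x v (J f) = J (A x v f))
    (s : ℝ × ℝ → F) (x v : ℝ × ℝ) (hs : DifferentiableAt ℝ s x) :
    covD A (fun y => J (s y)) x v = J (covD A s x v) := by
  have h2 : HasFDerivAt (fun y => J (s y)) (J.comp (fderiv ℝ s x)) x :=
    J.hasFDerivAt.comp x hs.hasFDerivAt
  simp [covD, h2.fderiv, hJcomm, map_add]

end auxlemmas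

/-- Lemma (key identity for Hermitian connections): if `∇` is a Hermitian connection
(metric and commuting with the fiberwise complex structure `J`) on a Hermitian bundle over
a Riemann surface, and `α` is a `(1,0)`-form (`α∘j = Jα`), then pointwise
`⟨d^∇δ^∇α, α⟩ = ⟨δ^∇d^∇α, α⟩`, and consequently
`⟨Δ^∇α, α⟩ = 2⟨δ^∇d^∇α, α⟩` where `Δ^∇ = d^∇δ^∇ + δ^∇d^∇`. -/
theorem hermitian_connection_laplacian_identity
    {F : Type*} [NormedAddCommGroup F] [InnerProductSpace ℝ F]
    (J : F →L[ℝ] F) (hJ2 : ∀ f : F, J (J f) = -f)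
    (hJiso : ∀ f g : F, ⟪J f, J g⟫ = ⟪f, g⟫)
    (A : ℝ × ℝ → (ℝ × ℝ) →L[ℝ] F →L[ℝ] F) (hA : ContDiff ℝ (⊤ : ℕ∞) A)
    (hmetric : ∀ (x v : ℝ × ℝ) (f g : F), ⟪A x v f, g⟫ + ⟪f, A x v g⟫ = 0)
    (hJcomm : ∀ (x v : ℝ × ℝ) (f : F), A x v (J f) = J (A x v f))
    (α : ℝ × ℝ → (ℝ × ℝ) →L[ℝ] F) (hα : ContDiff ℝ (⊤ : ℕ∞) α)
    (hol : ∀ (x v : ℝ × ℝ), α x (jE v) = J (α x v)) :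
    (∀ x : ℝ × ℝ,
        ip1 (fun y v => covD A (fun z => covCodiff A (fun y' v' => α y' v') z) y v)
          (fun y v => α y v) x
        = ip1 (covCodiff2 A (covExtD A (fun y v => α y v))) (fun y v => α y v) x)
    ∧ (∀ x : ℝ × ℝ,
        ip1 (fun y v =>
            covD A (fun z => covCodiff A (fun y' v' => α y' v') z) y v
              + covCodiff2 A (covExtD A (fun y' v' => α y' v')) y v)
          (fun y v => α y v) x
        = 2 * ip1 (covCodiff2 A (covExtD A (fun y v => α y v))) (fun y v => α y v) x) := by

  set a : ℝ × ℝ → F := fun y => α y e1 with ha_def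
  have hb : ∀ y, α y e2 = J (a y) := by
    intro y
    have h := hol y e1
    rwa [jE_e1] at h
  have ha : ContDiff ℝ (⊤ : ℕ∞) a := hα.clm_apply contDiff_const
  have hda : Differentiable ℝ a := ha.differentiable (by simp)
  have hcovDa : ∀ v, ContDiff ℝ (⊤ : ℕ∞) (fun x => covD A a x v) := by
    intro v
    have h1 : ContDiff ℝ (⊤ : ℕ∞) (fun x => fderiv ℝ a x v) :=
      (ha.fderiv_right (by simp)).clm_apply contDiff_const
    have h2 : ContDiff ℝ (⊤ : ℕ∞) (fun x => A x v (a x)) :=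
      (hA.clm_apply contDiff_const).clm_apply ha
    exact h1.add h2
  set u : ℝ × ℝ → F := fun x => covD A a x e1 + J (covD A a x e2) with hu_def
  have hu : ContDiff ℝ (⊤ : ℕ∞) u := (hcovDa e1).add (J.contDiff.comp (hcovDa e2))
  have hdu : Differentiable ℝ u := hu.differentiable (by simp)
  -- δα = -u
  have hδ : (fun z => covCodiff A (fun y' v' => α y' v') z) = fun z => -(u z) := by
    funext z
    have h1 : (fun y => -(α y (jE e2))) = a := by
      funext y; rw [jE_e2]; simp [ha_def]
    have h2 : (fun y => -(α y (jE e1))) = fun y => -(J (a y)) := by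
      funext y; rw [jE_e1, hb]
    simp only [covCodiff, covExtD]
    rw [h1, h2, covD_neg]
    rw [covD_J J A hJcomm a z e2 (hda z)]
    simp [hu_def]
  -- dα(e1,e2) = J u
  have hdα : (fun y => covExtD A (fun y' v' => α y' v') y e1 e2) = fun y => J (u y) := by
    funext y
    have h1 : (fun z => α z e2) = fun z => J (a z) := by
      funext z; rw [hb]
    simp only [covExtD]
    rw [h1, covD_J J A hJcomm a y e1 (hda y)]
    simp [hu_def, map_add, hJ2, sub_eq_add_neg]
    rfl
  -- d δα (v) = -(∇_v u)
  have hL : ∀ x v, covD A (fun z => covCodiff A (fun y' v' => α y' v') z) x v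
      = -(covD A u x v) := by
    intro x v
    rw [hδ, covD_neg]
  -- δ dα (v) = J (∇_{jv} u)
  have hR : ∀ x v, covCodiff2 A (covExtD A (fun y' v' => α y' v')) x v
      = J (covD A u x (jE v)) := by
    intro x v
    simp only [covCodiff2]
    rw [hdα, covD_J J A hJcomm u x (jE v) (hdu x)]
  have key : ∀ x : ℝ × ℝ,
      ip1 (fun y v => covD A (fun z => covCodiff A (fun y' v' => α y' v') z) y v)
        (fun y v => α y v) x
      = ip1 (covCodiff2 A (covExtD A (fun y v => α y v))) (fun y v => α y v) x := by
    intro x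
    simp only [ip1, hL, hR, jE_e1, jE_e2, covD_neg_vec]
    rw [hb x]
    set p := covD A u x e1
    set q := covD A u x e2
    set f := a x
    have h1 : ⟪J q, f⟫ = -⟪q, J f⟫ := by
      have := hJiso q (J f)
      rw [hJ2] at this
      simp only [inner_neg_right] at this
      linarith
    have h2 : ⟪J (-p), J f⟫ = -⟪p, f⟫ := by
      rw [map_neg]
      simp only [inner_neg_left]
      rw [hJiso]
    simp only [show α x e1 = f from rfl]
    simp only [inner_neg_left, h2, h1]
    ring
  refine ⟨key, fun x => ?_⟩
  have hadd : ip1 (fun y v =>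
      covD A (fun z => covCodiff A (fun y' v' => α y' v') z) y v
        + covCodiff2 A (covExtD A (fun y' v' => α y' v')) y v)
      (fun y v => α y v) x
      = ip1 (fun y v => covD A (fun z => covCodiff A (fun y' v' => α y' v') z) y v)
          (fun y v => α y v) x
        + ip1 (covCodiff2 A (covExtD A (fun y' v' => α y' v'))) (fun y v => α y v) x := by
    simp [ip1, inner_add_left]; ring
  rw [hadd, key x]
  ring
end
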